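/- arXiv:1104.2299 — 5 statements merged into one kernel-verified Lean document; each statement's English description precedes it below -/
import Mathlib

section
/- Let (τ_k) be i.i.d. copies of a positive-integer-valued random variable τ with P{τ=1} > 0 and p_j := P{τ = j} = 2^{-j} for j ∈ ℕ. Define the random walk with barrier n ≥ 2 by W_0(n) = 0 and W_k(n) = W_{k-1}(n) + τ_k·1{W_{k-1}(n) + τ_k < n}. Let Z_n* be the number of zero increments of (W_k(n)) before the walk's absorption (i.e., the number of k with W_k(n) = W_{k-1}(n) < n-1). Then P{Z_n* = m} = 2^{-(m+1)} for all m ∈ ℕ_0. -/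
/-!
Record a sample path by its finite list of steps up to absorption at `n - 1`. The cylinder of
a list `l` of positive steps has probability `2^{-Σ l}`, so the probability of absorption from
`s` with `m` zero increments is the total weight `F s m = absorptionMass n s m` of the
corresponding lists. Splitting
off the first step `t` (it moves to `s + t` if `t ≤ d := n - 1 - s`, and otherwise is a zero
increment, which happens with probability `2^{-d}`) gives
`F s m = Σ_{1 ≤ t ≤ d} 2^{-t} F (s + t) m + 2^{-d} F s (m - 1)` (the last term read as `0`
when `m = 0`), with `F (n - 1) m = [m = 0]`,
and by memorylessness of the geometric law the solution `F s m = 2^{-(m+1)}` does not depend on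
`s < n - 1`. Since these masses sum to `1`, the cylinders cover almost everything, so
`{Z = m}` coincides up to a null set with the union of its cylinders.
-/

open MeasureTheory ProbabilityTheory Set
open scoped ENNReal

lemma two_mul_inv_two_pow_succ (k : ℕ) : (2 : ℝ≥0∞) * 2⁻¹ ^ (k + 1) = 2⁻¹ ^ k := by
  rw [pow_succ, mul_left_comm, ENNReal.mul_inv_cancel two_ne_zero ENNReal.ofNat_ne_top, mul_one]

lemma tsum_inv_two_pow_add_succ (k : ℕ) :
    ∑' t, (2⁻¹ : ℝ≥0∞) ^ (t + (k + 1)) = 2⁻¹ ^ k := by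
  rw [tsum_congr fun t => pow_add _ t (k + 1), ENNReal.tsum_mul_right,
    ENNReal.tsum_geometric_two, two_mul_inv_two_pow_succ]

lemma sum_range_inv_two_pow_succ_add (k : ℕ) :
    ∑ t ∈ Finset.range k, (2⁻¹ : ℝ≥0∞) ^ (t + 1) + 2⁻¹ ^ k = 1 := by
  induction k with
  | zero => simp
  | succ k ih => rw [Finset.sum_range_succ, add_assoc, ← two_mul, two_mul_inv_two_pow_succ, ih]

lemma eq_of_forall_eq_sum_add {N : ℕ} {f : ℕ → ℝ≥0∞} {a c : ℝ≥0∞}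
    (hf : ∀ s < N, f s =
      ∑ t ∈ Finset.range (N - s), 2⁻¹ ^ (t + 1) * f (s + t + 1) + 2⁻¹ ^ (N - s) * c)
    (hN : f N + c = 2 * a) {s : ℕ} (hs : s < N) : f s = a := by
  induction hk : N - s using Nat.strong_induction_on generalizing s with
  | _ k ih =>
  obtain ⟨k, rfl⟩ : ∃ j, k = j + 1 := ⟨k - 1, by omega⟩
  have hinner : ∑ t ∈ Finset.range k, 2⁻¹ ^ (t + 1) * f (s + t + 1) =
      ∑ t ∈ Finset.range k, 2⁻¹ ^ (t + 1) * a :=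
    Finset.sum_congr rfl fun t ht => by
      rw [ih (N - (s + t + 1)) (by omega) (by have := Finset.mem_range.1 ht; omega) rfl]
  calc f s = (∑ t ∈ Finset.range k, 2⁻¹ ^ (t + 1)) * a + 2⁻¹ ^ (k + 1) * (f N + c) := by
        rw [hf s hs, hk, Finset.sum_range_succ, hinner, Finset.sum_mul,
          show s + k + 1 = N by omega]
        ring
    _ = (∑ t ∈ Finset.range k, 2⁻¹ ^ (t + 1) + 2⁻¹ ^ k) * a := by
        rw [hN, ← mul_assoc, mul_comm _ 2, two_mul_inv_two_pow_succ]
        ring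
    _ = a := by rw [sum_range_inv_two_pow_succ_add, one_mul]

lemma tsum_list_eq_tsum_tsum_cons {α : Type*} {f : List α → ℝ≥0∞} (hf : f [] = 0) :
    ∑' l, f l = ∑' (a) (l), f (a :: l) := by
  have hcons : Function.Injective fun p : α × List α => p.1 :: p.2 := by
    rintro ⟨a, l⟩ ⟨b, l'⟩ h
    simpa using h
  rw [← ENNReal.tsum_prod, hcons.tsum_eq]
  rintro (_ | ⟨a, l⟩) hl
  · exact absurd hf hl
  · exact ⟨(a, l), rfl⟩

lemma measure_preimage_singleton_eq_of_subset {Ω α : Type*} [MeasurableSpace Ω]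
    {μ : Measure Ω} {Z : Ω → α} {U : α → Set Ω} (hU : ∀ a, U a ⊆ Z ⁻¹' {a})
    (hfull : μ (⋃ a, U a)ᶜ = 0) (a : α) : μ (Z ⁻¹' {a}) = μ (U a) := by
  refine le_antisymm ?_ (measure_mono (hU a))
  calc μ (Z ⁻¹' {a}) ≤ μ (U a ∪ (⋃ b, U b)ᶜ) := measure_mono fun ω hω => by
        by_cases h : ω ∈ ⋃ b, U b
        · obtain ⟨b, hb⟩ := mem_iUnion.1 h
          obtain rfl : b = a := (hU b hb).symm.trans hω
          exact .inl hb
        · exact .inr h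
    _ ≤ μ (U a) + μ (⋃ b, U b)ᶜ := measure_union_le _ _
    _ = μ (U a) := by rw [hfull, add_zero]

namespace BarrierWalk

def step (n s t : ℕ) : ℕ := s + if s + t < n then t else 0

def endpoint (n s : ℕ) (l : List ℕ) : ℕ := l.foldl (step n) s

def zeroCount (n : ℕ) : ℕ → List ℕ → ℕ
  | _, [] => 0
  | s, t :: l => (if step n s t = s ∧ s < n - 1 then 1 else 0) + zeroCount n (step n s t) l

/-- The prefix condition makes this set prefix-free, so the cylinders of its members are
disjoint. -/
def absorbingPaths (n s m : ℕ) : Set (List ℕ) :=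
  {l | (∀ t ∈ l, 1 ≤ t) ∧ endpoint n s l = n - 1 ∧
    (∀ i < l.length, endpoint n s (l.take i) < n - 1) ∧ zeroCount n s l = m}

noncomputable def weight (l : List ℕ) : ℝ≥0∞ := 2⁻¹ ^ l.sum

noncomputable def absorptionMass (n s m : ℕ) : ℝ≥0∞ :=
  ∑' l, (absorbingPaths n s m).indicator weight l

section Paths

variable {n s m t : ℕ} {l : List ℕ}

lemma step_of_lt (hst : s + t < n) : step n s t = s + t := by
  rw [step, if_pos hst]

lemma step_of_le (hst : n ≤ s + t) : step n s t = s := by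
  rw [step, if_neg (by omega), add_zero]

lemma step_top (n t : ℕ) : step n (n - 1) t = n - 1 := by
  unfold step
  split_ifs <;> omega

lemma endpoint_top (n : ℕ) (l : List ℕ) : endpoint n (n - 1) l = n - 1 := by
  induction l with
  | nil => rfl
  | cons t l ih => simpa only [endpoint, List.foldl_cons, step_top] using ih

lemma endpoint_append (n s : ℕ) (l l' : List ℕ) :
    endpoint n s (l ++ l') = endpoint n (endpoint n s l) l' :=
  List.foldl_append

lemma zeroCount_append_singleton (n s : ℕ) (l : List ℕ) (t : ℕ) :
    zeroCount n s (l ++ [t]) = zeroCount n s l +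
      if step n (endpoint n s l) t = endpoint n s l ∧ endpoint n s l < n - 1 then 1 else 0 := by
  induction l generalizing s with
  | nil =>
    simp only [List.nil_append, zeroCount, add_zero, zero_add]
    rfl
  | cons x l ih =>
    simp only [List.cons_append, zeroCount, ih, add_assoc]
    rfl

lemma nil_mem_absorbingPaths : [] ∈ absorbingPaths n s m ↔ s = n - 1 ∧ m = 0 := by
  simp [absorbingPaths, endpoint, zeroCount, eq_comm]

lemma cons_mem_absorbingPaths (hs : s < n - 1) :
    t :: l ∈ absorbingPaths n s m ↔ 1 ≤ t ∧ (∀ x ∈ l, 1 ≤ x) ∧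
      endpoint n (step n s t) l = n - 1 ∧
      (∀ i < l.length, endpoint n (step n s t) (l.take i) < n - 1) ∧
      (if step n s t = s then 1 else 0) + zeroCount n (step n s t) l = m := by
  simp only [absorbingPaths, mem_ofPred_eq, List.length_cons, Nat.forall_lt_succ_left,
    List.forall_mem_cons, endpoint, List.foldl_cons, List.take_zero, List.take_succ_cons,
    List.foldl_nil, zeroCount, hs, and_true, true_and, and_assoc]

lemma cons_mem_absorbingPaths_of_lt (hs : s < n - 1) (ht : 1 ≤ t) (hst : s + t < n) :
    t :: l ∈ absorbingPaths n s m ↔ l ∈ absorbingPaths n (s + t) m := by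
  rw [cons_mem_absorbingPaths hs, step_of_lt hst, if_neg (by omega), zero_add]
  simp only [absorbingPaths, mem_ofPred_eq, ht, true_and]

lemma cons_mem_absorbingPaths_succ_of_le (hs : s < n - 1) (hst : n ≤ s + t) :
    t :: l ∈ absorbingPaths n s (m + 1) ↔ l ∈ absorbingPaths n s m := by
  rw [cons_mem_absorbingPaths hs, step_of_le hst, if_pos rfl, add_comm, Nat.add_right_cancel_iff]
  simp only [absorbingPaths, mem_ofPred_eq, show 1 ≤ t by omega, true_and]

lemma cons_not_mem_absorbingPaths_zero_of_le (hs : s < n - 1) (hst : n ≤ s + t) :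
    t :: l ∉ absorbingPaths n s 0 := by
  simp [cons_mem_absorbingPaths hs, step_of_le hst]

lemma weight_cons (t : ℕ) (l : List ℕ) : weight (t :: l) = 2⁻¹ ^ t * weight l := by
  simp [weight, pow_add]

lemma indicator_cons_of_lt (l : List ℕ) (hs : s < n - 1) (ht : 1 ≤ t) (hst : s + t < n) :
    (absorbingPaths n s m).indicator weight (t :: l) =
      2⁻¹ ^ t * (absorbingPaths n (s + t) m).indicator weight l := by
  classical
  simp only [indicator_apply, cons_mem_absorbingPaths_of_lt hs ht hst, weight_cons, mul_ite,
    mul_zero]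

lemma indicator_succ_cons_of_le (l : List ℕ) (hs : s < n - 1) (hst : n ≤ s + t) :
    (absorbingPaths n s (m + 1)).indicator weight (t :: l) =
      2⁻¹ ^ t * (absorbingPaths n s m).indicator weight l := by
  classical
  simp only [indicator_apply, cons_mem_absorbingPaths_succ_of_le hs hst, weight_cons, mul_ite,
    mul_zero]

end Paths

section Mass

variable {n s : ℕ}

lemma absorptionMass_top (n m : ℕ) :
    absorptionMass n (n - 1) m = if m = 0 then 1 else 0 := by
  classical
  rw [absorptionMass, tsum_eq_single []]
  · simp [indicator_apply, nil_mem_absorbingPaths, weight]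
  rintro (_ | ⟨t, l⟩) hl
  · exact absurd rfl hl
  · refine indicator_of_notMem (fun h => ?_) _
    simpa [endpoint] using h.2.2.1 0 (by simp)

lemma absorptionMass_eq_sum_add_tsum {m : ℕ} (hs : s < n - 1) :
    absorptionMass n s m =
      ∑ t ∈ Finset.range (n - 1 - s), 2⁻¹ ^ (t + 1) * absorptionMass n (s + t + 1) m +
        ∑' (t) (l), (absorbingPaths n s m).indicator weight ((t + (n - s)) :: l) := by
  have hnil : (absorbingPaths n s m).indicator weight [] = 0 :=
    indicator_of_notMem (by rw [nil_mem_absorbingPaths]; omega) _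
  rw [absorptionMass, tsum_list_eq_tsum_tsum_cons hnil,
    ← Summable.sum_add_tsum_nat_add' (k := n - s) ENNReal.summable]
  congr 1
  obtain ⟨d, hd⟩ : ∃ d, n - s = d + 1 := ⟨n - s - 1, by omega⟩
  have hzero : ∀ l, (absorbingPaths n s m).indicator weight (0 :: l) = 0 := fun l =>
    indicator_of_notMem (fun h => by simpa using h.1 0 (by simp)) _
  rw [hd, Finset.sum_range_succ', show n - 1 - s = d by omega]
  simp only [hzero, tsum_zero, add_zero]
  refine Finset.sum_congr rfl fun t ht => ?_
  have hst : s + (t + 1) < n := by have := Finset.mem_range.1 ht; omega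
  simp only [indicator_cons_of_lt _ hs t.succ_pos hst, ENNReal.tsum_mul_left, absorptionMass,
    add_assoc]

lemma absorptionMass_zero_eq_sum (hs : s < n - 1) :
    absorptionMass n s 0 =
      ∑ t ∈ Finset.range (n - 1 - s), 2⁻¹ ^ (t + 1) * absorptionMass n (s + t + 1) 0 := by
  have hover : ∀ t l, (absorbingPaths n s 0).indicator weight ((t + (n - s)) :: l) = 0 :=
    fun t l => indicator_of_notMem (cons_not_mem_absorbingPaths_zero_of_le hs (by omega)) _
  rw [absorptionMass_eq_sum_add_tsum hs]
  simp only [hover, tsum_zero, add_zero]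

lemma absorptionMass_succ_eq_sum_add {m : ℕ} (hs : s < n - 1) :
    absorptionMass n s (m + 1) =
      ∑ t ∈ Finset.range (n - 1 - s), 2⁻¹ ^ (t + 1) * absorptionMass n (s + t + 1) (m + 1) +
        2⁻¹ ^ (n - 1 - s) * absorptionMass n s m := by
  have hover : ∀ t l, (absorbingPaths n s (m + 1)).indicator weight ((t + (n - s)) :: l) =
      2⁻¹ ^ (t + (n - s)) * (absorbingPaths n s m).indicator weight l :=
    fun t l => indicator_succ_cons_of_le l hs (by omega)
  rw [absorptionMass_eq_sum_add_tsum hs]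
  simp only [hover, ENNReal.tsum_mul_left]
  rw [← absorptionMass, ENNReal.tsum_mul_right, show n - s = n - 1 - s + 1 by omega,
    tsum_inv_two_pow_add_succ]

theorem absorptionMass_of_lt (m : ℕ) (hs : s < n - 1) :
    absorptionMass n s m = 2⁻¹ ^ (m + 1) := by
  induction m generalizing s with
  | zero =>
    refine eq_of_forall_eq_sum_add (f := (absorptionMass n · 0)) (c := 0)
      (fun s hs => ?_) ?_ hs
    · simp [absorptionMass_zero_eq_sum hs]
    · rw [absorptionMass_top, if_pos rfl, add_zero, two_mul_inv_two_pow_succ, pow_zero]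
  | succ m ih =>
    refine eq_of_forall_eq_sum_add (f := (absorptionMass n · (m + 1))) (c := 2⁻¹ ^ (m + 1))
      (fun s hs => ?_) ?_ hs
    · rw [absorptionMass_succ_eq_sum_add hs, ih hs]
    · rw [absorptionMass_top, if_neg m.succ_ne_zero, zero_add, two_mul_inv_two_pow_succ]

end Mass

section Stream

variable {n s : ℕ} {t : Stream' ℕ} {W : ℕ → ℕ}

lemma eq_endpoint_take (h0 : W 0 = s) (hW : ∀ k, W (k + 1) = step n (W k) (t k)) (k : ℕ) :
    W k = endpoint n s (t.take k) := by
  induction k with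
  | zero => exact h0
  | succ k ih =>
    rw [hW, ih, Stream'.take_succ', endpoint_append]
    rfl

lemma card_filter_range_eq_zeroCount (h0 : W 0 = s)
    (hW : ∀ k, W (k + 1) = step n (W k) (t k)) (K : ℕ) :
    ((Finset.range K).filter fun k => W (k + 1) = W k ∧ W k < n - 1).card =
      zeroCount n s (t.take K) := by
  induction K with
  | zero => rfl
  | succ K ih =>
    rw [Finset.card_filter, Finset.sum_range_succ, ← Finset.card_filter, ih, Stream'.take_succ',
      zeroCount_append_singleton, hW, eq_endpoint_take h0 hW]
    rfl

lemma eq_of_take_eq_of_mem_absorbingPaths {m m' : ℕ} {l l' : List ℕ}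
    (hl : l ∈ absorbingPaths n s m) (hl' : l' ∈ absorbingPaths n s m')
    (ht : t.take l.length = l) (ht' : t.take l'.length = l') (hlen : l.length ≤ l'.length) :
    l = l' := by
  have hprefix : l'.take l.length = l := by
    rw [← ht', Stream'.take_take, min_eq_right hlen, ht]
  rcases hlen.lt_or_eq with hlt | heq
  · have := hl'.2.2.1 l.length hlt
    rw [hprefix, hl.2.1] at this
    exact absurd this (lt_irrefl _)
  · rw [← hprefix, heq, List.take_length]

lemma ncard_zeroIncrements_eq {m : ℕ} {l : List ℕ} (h0 : W 0 = s)
    (hW : ∀ k, W (k + 1) = step n (W k) (t k)) (hl : l ∈ absorbingPaths n s m)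
    (ht : t.take l.length = l) : {k | W (k + 1) = W k ∧ W k < n - 1}.ncard = m := by
  have habsorbed : ∀ k, l.length ≤ k → W k = n - 1 := fun k hk => by
    obtain ⟨j, rfl⟩ := Nat.exists_eq_add_of_le hk
    rw [eq_endpoint_take h0 hW, Stream'.take_add, ht, endpoint_append, hl.2.1, endpoint_top]
  have hfinite : {k | W (k + 1) = W k ∧ W k < n - 1} =
      ↑((Finset.range l.length).filter fun k => W (k + 1) = W k ∧ W k < n - 1) := by
    ext k
    simp only [mem_ofPred_eq, Finset.coe_filter, Finset.mem_range, iff_and_self]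
    intro hk
    by_contra hlt
    exact absurd (habsorbed k (not_lt.1 hlt)) hk.2.ne
  rw [hfinite, ncard_coe_finset, card_filter_range_eq_zeroCount h0 hW, ht, hl.2.2.2]

end Stream

section Cylinder

variable {Ω : Type*} {τ : ℕ → Ω → ℕ}

def steps (τ : ℕ → Ω → ℕ) (ω : Ω) : Stream' ℕ := fun k => τ k ω

def cylinder (τ : ℕ → Ω → ℕ) (l : List ℕ) : Set Ω :=
  {ω | (steps τ ω).take l.length = l}

lemma cylinder_eq_iInter (l : List ℕ) :
    cylinder τ l = ⋂ i ∈ Finset.range l.length, τ i ⁻¹' {l.getD i 0} := by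
  ext ω
  simp only [cylinder, mem_ofPred_eq, mem_iInter, Finset.mem_range, mem_preimage,
    mem_singleton_iff]
  constructor
  · rintro h i hi
    rw [← h, List.getD_eq_getElem _ _ (by simpa using hi), Stream'.take_get]
    rfl
  · intro h
    refine List.ext_getElem (Stream'.length_take _ _) fun i hi _ => ?_
    rw [Stream'.take_get, ← List.getD_eq_getElem l 0]
    exact h i (by simpa using hi)

variable [MeasurableSpace Ω] {μ : Measure Ω}

lemma measurableSet_cylinder (hτ : ∀ k, Measurable (τ k)) (l : List ℕ) :
    MeasurableSet (cylinder τ l) := by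
  rw [cylinder_eq_iInter]
  exact .biInter (to_countable _) fun i _ => hτ i (measurableSet_singleton _)

lemma measure_cylinder (hiid : iIndepFun τ μ)
    (hlaw : ∀ k j, 1 ≤ j → μ (τ k ⁻¹' {j}) = 2⁻¹ ^ j) {l : List ℕ} (hl : ∀ j ∈ l, 1 ≤ j) :
    μ (cylinder τ l) = weight l := by
  rw [cylinder_eq_iInter,
    hiid.measure_inter_preimage_eq_mul _ fun _ _ => measurableSet_singleton _,
    Finset.prod_range, weight, ← Fin.sum_univ_getElem, ← Finset.prod_pow_eq_pow_sum]
  refine Finset.prod_congr rfl fun i _ => ?_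
  rw [List.getD_eq_getElem _ _ i.2]
  exact hlaw _ _ (hl _ (List.getElem_mem _))

lemma measure_biUnion_cylinder (hτ : ∀ k, Measurable (τ k)) (hiid : iIndepFun τ μ)
    (hlaw : ∀ k j, 1 ≤ j → μ (τ k ⁻¹' {j}) = 2⁻¹ ^ j) (n s m : ℕ) :
    μ (⋃ l ∈ absorbingPaths n s m, cylinder τ l) = absorptionMass n s m := by
  have hdisj : (absorbingPaths n s m).PairwiseDisjoint (cylinder τ) := by
    intro l hl l' hl' hne
    refine disjoint_left.2 fun ω hω hω' => hne ?_
    rcases le_total l.length l'.length with hlen | hlen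
    · exact eq_of_take_eq_of_mem_absorbingPaths hl hl' hω hω' hlen
    · exact (eq_of_take_eq_of_mem_absorbingPaths hl' hl hω' hω hlen).symm
  rw [measure_biUnion (to_countable _) hdisj fun l _ => measurableSet_cylinder hτ l,
    absorptionMass, ← tsum_subtype]
  exact tsum_congr fun l => measure_cylinder hiid hlaw l.2.1

end Cylinder

end BarrierWalk

open BarrierWalk in
theorem barrier_walk_zero_increments_geometric_general
    {Ω : Type*} [MeasurableSpace Ω] (μ : Measure Ω) [IsProbabilityMeasure μ]
    (n : ℕ) (hn : 2 ≤ n)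
    (τ : ℕ → Ω → ℕ) (hτmeas : ∀ k, Measurable (τ k))
    (hiid : iIndepFun τ μ)
    (hlaw : ∀ k j, 1 ≤ j → μ {ω | τ k ω = j} = ENNReal.ofReal ((1/2 : ℝ) ^ j))
    -- the walk with barrier `n`
    (walk : ℕ → Ω → ℕ)
    (hwalk0 : ∀ ω, walk 0 ω = 0)
    (hwalk : ∀ k ω, walk (k + 1) ω =
      walk k ω + (if walk k ω + τ k ω < n then τ k ω else 0)) :
    ∀ m : ℕ,
      μ {ω | Set.ncard {k : ℕ | walk (k + 1) ω = walk k ω ∧ walk k ω < n - 1} = m}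
        = ENNReal.ofReal ((1/2 : ℝ) ^ (m + 1)) := by
  have hpow : ∀ j, ENNReal.ofReal ((1/2 : ℝ) ^ j) = 2⁻¹ ^ j := fun j => by
    rw [one_div, ENNReal.ofReal_pow (by norm_num), ENNReal.ofReal_inv_of_pos (by norm_num),
      ENNReal.ofReal_ofNat]
  have hlaw' : ∀ k j, 1 ≤ j → μ (τ k ⁻¹' {j}) = 2⁻¹ ^ j := fun k j hj =>
    (hlaw k j hj).trans (hpow j)
  set Z : Ω → ℕ := fun ω => {k | walk (k + 1) ω = walk k ω ∧ walk k ω < n - 1}.ncard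
  set U : ℕ → Set Ω := fun m => ⋃ l ∈ absorbingPaths n 0 m, cylinder τ l
  have hUZ : ∀ m, U m ⊆ Z ⁻¹' {m} := fun m ω hω => by
    obtain ⟨l, hl, hωl⟩ := mem_iUnion₂.1 hω
    exact ncard_zeroIncrements_eq (W := (walk · ω)) (hwalk0 ω) (fun k => hwalk k ω) hl hωl
  have hμU : ∀ m, μ (U m) = 2⁻¹ ^ (m + 1) := fun m =>
    (measure_biUnion_cylinder hτmeas hiid hlaw' n 0 m).trans (absorptionMass_of_lt m (by omega))
  have hfull : μ (⋃ m, U m)ᶜ = 0 := by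
    have hmeas : ∀ m, MeasurableSet (U m) := fun m =>
      .biUnion (to_countable _) fun l _ => measurableSet_cylinder hτmeas l
    rw [prob_compl_eq_zero_iff (.iUnion hmeas), measure_iUnion (fun i j hij =>
      ((disjoint_singleton.2 hij).preimage Z).mono (hUZ i) (hUZ j)) hmeas]
    simp only [hμU, ENNReal.tsum_geometric_add_one, ENNReal.one_sub_inv_two, inv_inv]
    exact ENNReal.inv_mul_cancel two_ne_zero ENNReal.ofNat_ne_top
  intro m
  rw [hpow, ← hμU]
  exact measure_preimage_singleton_eq_of_subset hUZ hfull m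

/-- **Random walk with barrier and geometric zero increments.**
Let `(τ_k)` be i.i.d. with `P{τ = j} = 2^{-j}` on `ℕ = {1,2,…}`, and define the
random walk with barrier `n ≥ 2` by `W_0 = 0`, `W_k = W_{k-1} + τ_k·1{W_{k-1}+τ_k < n}`.
Then the number `Z_n*` of zero increments before absorption (indices `k` with
`W_{k+1} = W_k < n-1`) satisfies `P{Z_n* = m} = 2^{-(m+1)}`. -/
theorem barrier_walk_zero_increments_geometric
    {Ω : Type*} [MeasurableSpace Ω] (μ : Measure Ω) [IsProbabilityMeasure μ]
    (n : ℕ) (hn : 2 ≤ n)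
    (τ : ℕ → Ω → ℕ) (hτmeas : ∀ k, Measurable (τ k))
    (hiid : iIndepFun τ μ)
    (hlaw : ∀ k j, 1 ≤ j → μ {ω | τ k ω = j} = ENNReal.ofReal ((1/2 : ℝ) ^ j))
    (hpos : ∀ k, ∀ᵐ ω ∂μ, 1 ≤ τ k ω)
    -- the walk with barrier `n`
    (walk : ℕ → Ω → ℕ)
    (hwalk0 : ∀ ω, walk 0 ω = 0)
    (hwalk : ∀ k ω, walk (k + 1) ω =
      walk k ω + (if walk k ω + τ k ω < n then τ k ω else 0)) :
    ∀ m : ℕ,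
      μ {ω | Set.ncard {k : ℕ | walk (k + 1) ω = walk k ω ∧ walk k ω < n - 1} = m}
        = ENNReal.ofReal ((1/2 : ℝ) ^ (m + 1)) :=
  barrier_walk_zero_increments_geometric_general μ n hn τ hτmeas hiid hlaw walk hwalk0 hwalk
end

section
/- Let Ψ(s) = E[e^{-sθ}] be the Laplace transform of a random variable θ taking values in [0,1] with P{θ > 0} > 0. Then each of the functions f_2(t) := (1 − Ψ(2e^t))·1_{(−∞,0)}(t), f_3(t) := (1 − Ψ²(e^t))·1_{(−∞,0)}(t), f_4(t) := (Ψ(e^t) − exp(−e^t))·1_{(−∞,0)}(t), f_5(t) := exp(−e^t)(Ψ(e^t) − exp(−e^t)), and f_6(t) := exp(−e^t)(1 − Ψ(e^t)) is nonnegative, integrable on ℝ, and the map t ↦ e^{−t} f_k(t) is nonincreasing (k = 2,...,6). -/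
open MeasureTheory ProbabilityTheory Real Set

lemma exp_int_eval {x c d : ℝ} (hx : x ≠ 0) :
    ∫ u in c..d, Real.exp (-(x*u)) = (Real.exp (-(x*c)) - Real.exp (-(x*d)))/x := by
  have h : ∀ u : ℝ, Real.exp (-(x*u)) = Real.exp ((-x) * u) := by intro u; ring_nf
  simp_rw [h]
  rw [intervalIntegral.integral_comp_mul_left Real.exp (neg_ne_zero.mpr hx),
    integral_exp]
  rw [smul_eq_mul, inv_neg, div_eq_inv_mul]
  ring

lemma exp_div_mono {a b c d : ℝ} (ha : 0 < a) (hab : a ≤ b) (hc : 0 ≤ c) (hcd : c ≤ d) :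
    (Real.exp (-(b*c)) - Real.exp (-(b*d)))/b ≤ (Real.exp (-(a*c)) - Real.exp (-(a*d)))/a := by
  have hb : (0:ℝ) < b := lt_of_lt_of_le ha hab
  rw [← exp_int_eval ha.ne', ← exp_int_eval hb.ne']
  refine intervalIntegral.integral_mono_on hcd ?_ ?_ ?_
  · exact (Real.continuous_exp.comp (continuous_const.mul continuous_id).neg).intervalIntegrable _ _
  · exact (Real.continuous_exp.comp (continuous_const.mul continuous_id).neg).intervalIntegrable _ _
  · intro u hu
    have hu0 : 0 ≤ u := le_trans hc hu.1
    exact Real.exp_le_exp.mpr (by nlinarith)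

lemma integrable_exp_neg_abs' : Integrable (fun t : ℝ => Real.exp (-|t|)) := by
  rw [← integrableOn_univ, ← Set.Iic_union_Ioi (a := (0:ℝ))]
  refine IntegrableOn.union ?_ ?_
  · exact (integrableOn_exp_Iic 0).congr_fun
      (fun x hx => by rw [abs_of_nonpos hx, neg_neg]) measurableSet_Iic
  · exact (exp_neg_integrableOn_Ioi 0 one_pos).congr_fun
      (fun x hx => by rw [abs_of_pos hx]; ring_nf) measurableSet_Ioi

lemma antitone_mul_nonneg' {g h : ℝ → ℝ} (hg : Antitone g) (hh : Antitone h)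
    (hg0 : ∀ t, 0 ≤ g t) (hh0 : ∀ t, 0 ≤ h t) : Antitone fun t => g t * h t :=
  fun a b hab => mul_le_mul (hg hab) (hh hab) (hh0 b) (hg0 a)

lemma antitone_indicator_mul {g : ℝ → ℝ}
    (h1 : ∀ ⦃a b : ℝ⦄, a ≤ b → b < 0 → Real.exp (-b) * g b ≤ Real.exp (-a) * g a)
    (h2 : ∀ t, t < 0 → 0 ≤ g t) :
    Antitone (fun t => Real.exp (-t) * Set.indicator (Set.Iio (0:ℝ)) g t) := by
  intro a b hab
  dsimp only
  by_cases hb : b < 0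
  · rw [Set.indicator_of_mem (mem_Iio.mpr hb),
      Set.indicator_of_mem (mem_Iio.mpr (lt_of_le_of_lt hab hb))]
    exact h1 hab hb
  · rw [Set.indicator_of_notMem (by simpa using hb), mul_zero]
    by_cases ha : a < 0
    · rw [Set.indicator_of_mem (mem_Iio.mpr ha)]
      exact mul_nonneg (Real.exp_pos _).le (h2 a ha)
    · rw [Set.indicator_of_notMem (by simpa using ha), mul_zero]

lemma expneg_mul_eq (t X : ℝ) : Real.exp (-t) * X = X / Real.exp t := by
  rw [Real.exp_neg]; ring

/-- **Direct Riemann integrability ingredients for `f₂,…,f₆`.**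
Each of the functions `f₂,…,f₆` built from the Laplace transform
`Ψ(s) = E[e^{-sθ}]` of a random variable `θ ∈ [0,1]` with `P{θ>0} > 0` is
nonnegative, Lebesgue integrable on `ℝ`, and `t ↦ e^{-t} f_k(t)` is nonincreasing. -/
theorem laplace_functions_dRi_ingredients
    {Ω : Type*} [MeasurableSpace Ω] (μ : Measure Ω) [IsProbabilityMeasure μ]
    (θ : Ω → ℝ) (hθmeas : Measurable θ)
    (hθ01 : ∀ᵐ ω ∂μ, θ ω ∈ Set.Icc (0:ℝ) 1)
    (hθpos : 0 < μ {ω | 0 < θ ω})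
    (Ψ : ℝ → ℝ) (hΨ : ∀ s, Ψ s = ∫ ω, Real.exp (-s * θ ω) ∂μ)
    (f₂ f₃ f₄ f₅ f₆ : ℝ → ℝ)
    (hf₂ : f₂ = Set.indicator (Set.Iio (0:ℝ)) (fun t => 1 - Ψ (2 * Real.exp t)))
    (hf₃ : f₃ = Set.indicator (Set.Iio (0:ℝ)) (fun t => 1 - (Ψ (Real.exp t)) ^ 2))
    (hf₄ : f₄ = Set.indicator (Set.Iio (0:ℝ))
      (fun t => Ψ (Real.exp t) - Real.exp (-Real.exp t)))
    (hf₅ : f₅ = fun t => Real.exp (-Real.exp t) * (Ψ (Real.exp t) - Real.exp (-Real.exp t)))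
    (hf₆ : f₆ = fun t => Real.exp (-Real.exp t) * (1 - Ψ (Real.exp t))) :
    (∀ f ∈ ({f₂, f₃, f₄, f₅, f₆} : Set (ℝ → ℝ)),
      (∀ t, 0 ≤ f t) ∧ Integrable f (volume : Measure ℝ) ∧
        Antitone (fun t => Real.exp (-t) * f t)) := by
  -- integrability of the basic integrand
  have hint : ∀ s : ℝ, 0 ≤ s → Integrable (fun ω => Real.exp (-s * θ ω)) μ := by
    intro s hs
    refine (integrable_const (1:ℝ)).mono'
      ((measurable_const.mul hθmeas).exp.aestronglyMeasurable) ?_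
    filter_upwards [hθ01] with ω hω
    rw [Real.norm_eq_abs, abs_of_pos (Real.exp_pos _)]
    have h : -s * θ ω ≤ 0 := by nlinarith [hω.1]
    have h2 := Real.exp_le_exp.mpr h
    rwa [Real.exp_zero] at h2
  -- basic properties of Ψ
  have hΨle1 : ∀ s : ℝ, 0 ≤ s → Ψ s ≤ 1 := by
    intro s hs
    rw [hΨ]
    have : ∫ ω, Real.exp (-s * θ ω) ∂μ ≤ ∫ _ω, (1:ℝ) ∂μ := by
      refine integral_mono_ae (hint s hs) (integrable_const 1) ?_
      filter_upwards [hθ01] with ω hω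
      have h : -s * θ ω ≤ 0 := by nlinarith [hω.1]
      have h2 := Real.exp_le_exp.mpr h
      rwa [Real.exp_zero] at h2
    simpa using this
  have hΨ0 : ∀ s : ℝ, 0 ≤ Ψ s := by
    intro s; rw [hΨ]; exact integral_nonneg fun ω => (Real.exp_pos _).le
  have hΨge : ∀ s : ℝ, 0 ≤ s → Real.exp (-s) ≤ Ψ s := by
    intro s hs
    rw [hΨ]
    have : ∫ _ω, Real.exp (-s) ∂μ ≤ ∫ ω, Real.exp (-s * θ ω) ∂μ := by
      refine integral_mono_ae (integrable_const _) (hint s hs) ?_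
      filter_upwards [hθ01] with ω hω
      exact Real.exp_le_exp.mpr (by nlinarith [hω.2])
    simpa using this
  have hΨmono : ∀ a b : ℝ, 0 ≤ a → a ≤ b → Ψ b ≤ Ψ a := by
    intro a b ha hab
    rw [hΨ, hΨ]
    refine integral_mono_ae (hint b (ha.trans hab)) (hint a ha) ?_
    filter_upwards [hθ01] with ω hω
    exact Real.exp_le_exp.mpr (by nlinarith [hω.1])
  have hΨsub : ∀ s : ℝ, 0 ≤ s → 1 - Ψ s ≤ s := by
    intro s hs
    have h : (1:ℝ) - s ≤ Ψ s := by
      rw [hΨ]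
      have : ∫ _ω, (1 - s : ℝ) ∂μ ≤ ∫ ω, Real.exp (-s * θ ω) ∂μ := by
        refine integral_mono_ae (integrable_const _) (hint s hs) ?_
        filter_upwards [hθ01] with ω hω
        have h1 := Real.add_one_le_exp (-s * θ ω)
        nlinarith [hω.1, hω.2]
      simpa using this
    linarith
  -- key monotonicity facts
  have hP5 : ∀ a b : ℝ, 0 < a → a ≤ b → (1 - Ψ b)/b ≤ (1 - Ψ a)/a := by
    intro a b ha hab
    have hb : (0:ℝ) < b := lt_of_lt_of_le ha hab
    have key : ∀ s : ℝ, 0 < s → (1 - Ψ s)/s = ∫ ω, (1 - Real.exp (-s * θ ω))/s ∂μ := by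
      intro s hs
      rw [hΨ, integral_div, integral_sub (integrable_const 1) (hint s hs.le)]
      simp
    rw [key a ha, key b hb]
    refine integral_mono_ae (((integrable_const 1).sub (hint b hb.le)).div_const b)
      (((integrable_const 1).sub (hint a ha.le)).div_const a) ?_
    filter_upwards [hθ01] with ω hω
    have := exp_div_mono ha hab (le_refl (0:ℝ)) hω.1
    simpa [neg_mul] using this
  have hP6 : ∀ a b : ℝ, 0 < a → a ≤ b →
      (Ψ b - Real.exp (-b))/b ≤ (Ψ a - Real.exp (-a))/a := by
    intro a b ha hab
    have hb : (0:ℝ) < b := lt_of_lt_of_le ha hab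
    have key : ∀ s : ℝ, 0 < s →
        (Ψ s - Real.exp (-s))/s = ∫ ω, (Real.exp (-s * θ ω) - Real.exp (-s))/s ∂μ := by
      intro s hs
      rw [hΨ, integral_div, integral_sub (hint s hs.le) (integrable_const _)]
      simp
    rw [key a ha, key b hb]
    refine integral_mono_ae (((hint b hb.le).sub (integrable_const _)).div_const b)
      (((hint a ha.le).sub (integrable_const _)).div_const a) ?_
    filter_upwards [hθ01] with ω hω
    have := exp_div_mono ha hab hω.1 hω.2
    simpa [neg_mul] using this
  -- antitone cores
  have hA6core : Antitone (fun t => Real.exp (-t) * (1 - Ψ (Real.exp t))) := by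
    intro a b hab
    dsimp only
    rw [expneg_mul_eq, expneg_mul_eq]
    exact hP5 (Real.exp a) (Real.exp b) (Real.exp_pos a) (Real.exp_le_exp.mpr hab)
  have hA4core : Antitone (fun t => Real.exp (-t) *
      (Ψ (Real.exp t) - Real.exp (-Real.exp t))) := by
    intro a b hab
    dsimp only
    rw [expneg_mul_eq, expneg_mul_eq]
    exact hP6 (Real.exp a) (Real.exp b) (Real.exp_pos a) (Real.exp_le_exp.mpr hab)
  have hexpanti : Antitone (fun t : ℝ => Real.exp (-Real.exp t)) :=
    fun a b hab => Real.exp_le_exp.mpr (neg_le_neg (Real.exp_le_exp.mpr hab))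
  -- measurability helpers
  have hantΨ : Antitone (fun t : ℝ => Ψ (Real.exp t)) :=
    fun a b hab => hΨmono _ _ (Real.exp_pos a).le (Real.exp_le_exp.mpr hab)
  have hcont : Continuous (fun t : ℝ => Real.exp (-Real.exp t)) :=
    Real.continuous_exp.comp Real.continuous_exp.neg
  -- the dominating function
  have hGint : Integrable (fun t : ℝ => 2 * Real.exp (-|t|)) (volume : Measure ℝ) :=
    integrable_exp_neg_abs'.const_mul 2
  -- nonnegativity
  have n₂ : ∀ t, 0 ≤ f₂ t := by
    intro t; rw [hf₂]
    exact Set.indicator_nonneg (fun x _ => sub_nonneg.mpr (hΨle1 _ (by positivity))) t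
  have n₃ : ∀ t, 0 ≤ f₃ t := by
    intro t; rw [hf₃]
    refine Set.indicator_nonneg (fun x _ => ?_) t
    nlinarith [hΨle1 (Real.exp x) (Real.exp_pos x).le, hΨ0 (Real.exp x)]
  have n₄ : ∀ t, 0 ≤ f₄ t := by
    intro t; rw [hf₄]
    exact Set.indicator_nonneg
      (fun x _ => sub_nonneg.mpr (hΨge _ (Real.exp_pos x).le)) t
  have n₅ : ∀ t, 0 ≤ f₅ t := by
    intro t; rw [hf₅]
    exact mul_nonneg (Real.exp_pos _).le (sub_nonneg.mpr (hΨge _ (Real.exp_pos t).le))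
  have n₆ : ∀ t, 0 ≤ f₆ t := by
    intro t; rw [hf₆]
    exact mul_nonneg (Real.exp_pos _).le (sub_nonneg.mpr (hΨle1 _ (Real.exp_pos t).le))
  -- the five claims
  intro f hf
  simp only [Set.mem_insert_iff, Set.mem_singleton_iff] at hf
  rcases hf with rfl | rfl | rfl | rfl | rfl
  · -- f₂
    refine ⟨n₂, ?_, ?_⟩
    · refine hGint.mono' ?_ (ae_of_all _ ?_)
      · rw [hf₂]
        have hmono : Monotone (fun t : ℝ => 1 - Ψ (2 * Real.exp t)) := by
          intro a b hab
          have h := hΨmono (2 * Real.exp a) (2 * Real.exp b) (by positivity)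
            (by nlinarith [Real.exp_le_exp.mpr hab])
          dsimp only
          linarith
        exact (hmono.measurable.indicator measurableSet_Iio).aestronglyMeasurable
      · intro t
        rw [Real.norm_eq_abs, abs_of_nonneg (n₂ t), hf₂]
        by_cases ht : t < 0
        · rw [Set.indicator_of_mem (mem_Iio.mpr ht), abs_of_neg ht, neg_neg]
          linarith [hΨsub (2 * Real.exp t) (by positivity)]
        · rw [Set.indicator_of_notMem (by simpa using ht)]
          positivity
    · rw [hf₂]
      refine antitone_indicator_mul ?_ ?_
      · intro a b hab _
        have h := hP5 (2 * Real.exp a) (2 * Real.exp b) (by positivity)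
          (by nlinarith [Real.exp_le_exp.mpr hab])
        rw [div_le_div_iff₀ (by positivity) (by positivity)] at h
        rw [expneg_mul_eq, expneg_mul_eq,
          div_le_div_iff₀ (Real.exp_pos _) (Real.exp_pos _)]
        nlinarith [Real.exp_pos a, Real.exp_pos b]
      · intro t _
        exact sub_nonneg.mpr (hΨle1 _ (by positivity))
  · -- f₃
    refine ⟨n₃, ?_, ?_⟩
    · refine hGint.mono' ?_ (ae_of_all _ ?_)
      · rw [hf₃]
        have hmono : Monotone (fun t : ℝ => 1 - (Ψ (Real.exp t)) ^ 2) := by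
          intro a b hab
          have h := hantΨ hab
          have h2 := pow_le_pow_left₀ (hΨ0 (Real.exp b)) h 2
          simp only
          linarith
        exact (hmono.measurable.indicator measurableSet_Iio).aestronglyMeasurable
      · intro t
        rw [Real.norm_eq_abs, abs_of_nonneg (n₃ t), hf₃]
        by_cases ht : t < 0
        · rw [Set.indicator_of_mem (mem_Iio.mpr ht), abs_of_neg ht, neg_neg]
          nlinarith [hΨsub (Real.exp t) (Real.exp_pos t).le, hΨ0 (Real.exp t),
            hΨle1 (Real.exp t) (Real.exp_pos t).le, sq_nonneg (1 - Ψ (Real.exp t))]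
        · rw [Set.indicator_of_notMem (by simpa using ht)]
          positivity
    · rw [hf₃]
      refine antitone_indicator_mul ?_ ?_
      · intro a b hab _
        have h := hP5 (Real.exp a) (Real.exp b) (Real.exp_pos a) (Real.exp_le_exp.mpr hab)
        rw [div_le_div_iff₀ (Real.exp_pos _) (Real.exp_pos _)] at h
        have hx : Ψ (Real.exp b) ≤ Ψ (Real.exp a) := hantΨ hab
        have hxa1 : Ψ (Real.exp a) ≤ 1 := hΨle1 _ (Real.exp_pos a).le
        have hxb0 : 0 ≤ Ψ (Real.exp b) := hΨ0 _
        rw [expneg_mul_eq, expneg_mul_eq,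
          div_le_div_iff₀ (Real.exp_pos _) (Real.exp_pos _)]
        nlinarith [mul_le_mul_of_nonneg_right h
            (by linarith : (0:ℝ) ≤ 1 + Ψ (Real.exp b)),
          mul_nonneg (mul_nonneg (by linarith : (0:ℝ) ≤ 1 - Ψ (Real.exp a))
            (Real.exp_pos b).le) (by linarith : (0:ℝ) ≤ Ψ (Real.exp a) - Ψ (Real.exp b))]
      · intro t _
        nlinarith [hΨle1 (Real.exp t) (Real.exp_pos t).le, hΨ0 (Real.exp t)]
  · -- f₄
    refine ⟨n₄, ?_, ?_⟩
    · refine hGint.mono' ?_ (ae_of_all _ ?_)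
      · rw [hf₄]
        exact (((hantΨ.measurable.sub hcont.measurable)).indicator
          measurableSet_Iio).aestronglyMeasurable
      · intro t
        rw [Real.norm_eq_abs, abs_of_nonneg (n₄ t), hf₄]
        by_cases ht : t < 0
        · rw [Set.indicator_of_mem (mem_Iio.mpr ht), abs_of_neg ht, neg_neg]
          linarith [hΨle1 (Real.exp t) (Real.exp_pos t).le,
            Real.add_one_le_exp (-Real.exp t), Real.exp_pos t]
        · rw [Set.indicator_of_notMem (by simpa using ht)]
          positivity
    · rw [hf₄]
      refine antitone_indicator_mul ?_ ?_
      · intro a b hab _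
        exact hA4core hab
      · intro t _
        exact sub_nonneg.mpr (hΨge _ (Real.exp_pos t).le)
  · -- f₅
    refine ⟨n₅, ?_, ?_⟩
    · refine hGint.mono' ?_ (ae_of_all _ ?_)
      · rw [hf₅]
        exact (hcont.measurable.mul
          (hantΨ.measurable.sub hcont.measurable)).aestronglyMeasurable
      · intro t
        rw [Real.norm_eq_abs, abs_of_nonneg (n₅ t), hf₅]
        dsimp only
        have hd0 : 0 ≤ Ψ (Real.exp t) - Real.exp (-Real.exp t) :=
          sub_nonneg.mpr (hΨge _ (Real.exp_pos t).le)
        have he1 : Real.exp (-Real.exp t) ≤ 1 := by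
          have h := Real.exp_le_exp.mpr (neg_nonpos_of_nonneg (Real.exp_pos t).le)
          rwa [Real.exp_zero] at h
        by_cases ht : t < 0
        · rw [abs_of_neg ht, neg_neg]
          have hd : Ψ (Real.exp t) - Real.exp (-Real.exp t) ≤ Real.exp t := by
            linarith [hΨle1 (Real.exp t) (Real.exp_pos t).le,
              Real.add_one_le_exp (-Real.exp t)]
          nlinarith [mul_le_of_le_one_left hd0 he1, Real.exp_pos t]
        · push_neg at ht
          rw [abs_of_nonneg ht]
          have hd1 : Ψ (Real.exp t) - Real.exp (-Real.exp t) ≤ 1 := by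
            linarith [hΨle1 (Real.exp t) (Real.exp_pos t).le, Real.exp_pos (-Real.exp t)]
          have hee : Real.exp (-Real.exp t) ≤ Real.exp (-t) :=
            Real.exp_le_exp.mpr (neg_le_neg (by linarith [Real.add_one_le_exp t]))
          nlinarith [mul_le_of_le_one_right (Real.exp_pos (-Real.exp t)).le hd1,
            Real.exp_pos (-t)]
    · have heq : (fun t => Real.exp (-t) * f t) = fun t =>
          Real.exp (-Real.exp t) *
            (Real.exp (-t) * (Ψ (Real.exp t) - Real.exp (-Real.exp t))) := by
        funext t; rw [hf₅]; ring
      rw [heq]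
      exact antitone_mul_nonneg' hexpanti hA4core (fun t => (Real.exp_pos _).le)
        (fun t => mul_nonneg (Real.exp_pos _).le
          (sub_nonneg.mpr (hΨge _ (Real.exp_pos t).le)))
  · -- f₆
    refine ⟨n₆, ?_, ?_⟩
    · refine hGint.mono' ?_ (ae_of_all _ ?_)
      · rw [hf₆]
        exact (hcont.measurable.mul
          (measurable_const.sub hantΨ.measurable)).aestronglyMeasurable
      · intro t
        rw [Real.norm_eq_abs, abs_of_nonneg (n₆ t), hf₆]
        dsimp only
        have hd0 : 0 ≤ 1 - Ψ (Real.exp t) :=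
          sub_nonneg.mpr (hΨle1 _ (Real.exp_pos t).le)
        have he1 : Real.exp (-Real.exp t) ≤ 1 := by
          have h := Real.exp_le_exp.mpr (neg_nonpos_of_nonneg (Real.exp_pos t).le)
          rwa [Real.exp_zero] at h
        by_cases ht : t < 0
        · rw [abs_of_neg ht, neg_neg]
          have hd : 1 - Ψ (Real.exp t) ≤ Real.exp t := hΨsub _ (Real.exp_pos t).le
          nlinarith [mul_le_of_le_one_left hd0 he1, Real.exp_pos t]
        · push_neg at ht
          rw [abs_of_nonneg ht]
          have hd1 : 1 - Ψ (Real.exp t) ≤ 1 := by linarith [hΨ0 (Real.exp t)]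
          have hee : Real.exp (-Real.exp t) ≤ Real.exp (-t) :=
            Real.exp_le_exp.mpr (neg_le_neg (by linarith [Real.add_one_le_exp t]))
          nlinarith [mul_le_of_le_one_right (Real.exp_pos (-Real.exp t)).le hd1,
            Real.exp_pos (-t)]
    · have heq : (fun t => Real.exp (-t) * f t) = fun t =>
          Real.exp (-Real.exp t) * (Real.exp (-t) * (1 - Ψ (Real.exp t))) := by
        funext t; rw [hf₆]; ring
      rw [heq]
      exact antitone_mul_nonneg' hexpanti hA6core (fun t => (Real.exp_pos _).le)
        (fun t => mul_nonneg (Real.exp_pos _).le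
          (sub_nonneg.mpr (hΨle1 _ (Real.exp_pos t).le)))
end

section
/- Let (Y_α(t))_{t≥0} be a drift-free subordinator without killing whose Lévy measure is ν_α(dt) = e^{−t/α}/(1 − e^{−t/α})^{α+1}·1_{(0,∞)}(t) dt, for 0 < α < 1. Then its Laplace exponent is Φ_α(x) := −log E[e^{−x Y_α(1)}] = Γ(1−α)Γ(αx+1)/Γ(α(x−1)+1) − 1 for x ≥ 0; equivalently, ∫_0^∞ (1 − e^{−xt}) ν_α(dt) = Γ(1−α)Γ(αx+1)/Γ(α(x−1)+1) − 1. -/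
/-!
Substituting `u = exp (-t / α)` turns the integral into
`α * ∫ u in 0..1, (1 - u ^ s) / (1 - u) ^ (α + 1)` with `s = α x`. Integrating by parts against
`H u = (1 - u ^ s) * (1 - u) ^ (-α)`, which tends to `1` at `0` and to `0` at `1` because
`1 - u ^ s = O(1 - u)`, leaves `s * B(s, 1 - α) - 1`, and `s Γ(s) = Γ(s + 1)`.
-/

open MeasureTheory Real Set
open Filter Topology

theorem image_exp_neg_div_Ioi_zero {a : ℝ} (ha : 0 < a) :
    (fun t => exp (-t / a)) '' Ioi 0 = Ioo 0 1 := by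
  have : (fun t : ℝ => -t / a) '' Ioi 0 = Iio 0 := by
    ext y
    refine ⟨?_, fun hy => ⟨-(a * y), ?_, by field_simp⟩⟩
    · rintro ⟨t, ht, rfl⟩
      exact div_neg_of_neg_of_pos (neg_neg_of_pos ht) ha
    · exact neg_pos.2 (mul_neg_of_pos_of_neg ha hy)
  rw [← exp_zero, ← image_exp_Iio, ← this, image_image]

theorem integral_exp_neg_div_smul_comp_Ioi_zero {E : Type*} [NormedAddCommGroup E]
    [NormedSpace ℝ E] (g : ℝ → E) {a : ℝ} (ha : 0 < a) :
    ∫ t in Ioi 0, exp (-t / a) • g (exp (-t / a)) = a • ∫ u in (0:ℝ)..1, g u := by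
  have hderiv (t : ℝ) : HasDerivAt (fun t => exp (-t / a)) (-(exp (-t / a) / a)) t := by
    simpa [neg_div, div_eq_mul_inv] using ((hasDerivAt_neg t).div_const a).exp
  have hinj : InjOn (fun t => exp (-t / a)) (Ioi 0) := fun t _ t' _ h => by
    simpa [ha.ne'] using exp_injective h
  rw [intervalIntegral.integral_of_le zero_le_one, integral_Ioc_eq_integral_Ioo,
    ← image_exp_neg_div_Ioi_zero ha, integral_image_eq_integral_abs_deriv_smul measurableSet_Ioi
      (fun t _ => (hderiv t).hasDerivWithinAt) hinj, ← integral_smul]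
  refine setIntegral_congr_fun measurableSet_Ioi fun t _ => ?_
  rw [abs_neg, abs_of_pos (by positivity), smul_smul, mul_div_cancel₀ _ ha.ne']

theorem ofReal_rpow_mul_one_sub_rpow {s b u : ℝ} (hu : u ∈ Icc (0:ℝ) 1) :
    ((u ^ (s - 1) * (1 - u) ^ (b - 1) : ℝ) : ℂ)
      = (u : ℂ) ^ ((s : ℂ) - 1) * (1 - (u : ℂ)) ^ ((b : ℂ) - 1) := by
  rw [Complex.ofReal_mul, Complex.ofReal_cpow hu.1, Complex.ofReal_cpow (sub_nonneg.2 hu.2)]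
  push_cast
  rfl

theorem intervalIntegrable_rpow_mul_one_sub_rpow {s b : ℝ} (hs : 0 < s) (hb : 0 < b) :
    IntervalIntegrable (fun u : ℝ => u ^ (s - 1) * (1 - u) ^ (b - 1)) volume 0 1 := by
  refine (Complex.betaIntegral_convergent (u := s) (v := b) (by simpa) (by simpa)).norm.congr ?_
  intro u hu
  rw [uIoc_of_le zero_le_one] at hu
  dsimp only
  rw [← ofReal_rpow_mul_one_sub_rpow (Ioc_subset_Icc_self hu), Complex.norm_real,
    Real.norm_of_nonneg]
  exact mul_nonneg (rpow_nonneg hu.1.le _) (rpow_nonneg (sub_nonneg.2 hu.2) _)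

theorem integral_rpow_mul_one_sub_rpow {s b : ℝ} (hs : 0 < s) (hb : 0 < b) :
    ∫ u in (0:ℝ)..1, u ^ (s - 1) * (1 - u) ^ (b - 1) = ProbabilityTheory.beta s b := by
  rw [ProbabilityTheory.beta_eq_betaIntegralReal s b hs hb, Complex.betaIntegral,
    ← intervalIntegral.integral_congr fun u hu =>
      ofReal_rpow_mul_one_sub_rpow (s := s) (b := b) (uIcc_of_le (zero_le_one (α := ℝ)) ▸ hu),
    intervalIntegral.integral_ofReal, Complex.ofReal_re]

theorem one_sub_rpow_le_max_mul_one_sub {u s : ℝ} (hu0 : 0 < u) (hu1 : u ≤ 1) :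
    1 - u ^ s ≤ max s 1 * (1 - u) := by
  have bernoulli : 1 + max s 1 * (u - 1) ≤ u ^ max s 1 := by
    simpa using one_add_mul_self_le_rpow_one_add (s := u - 1) (by linarith) (le_max_right s 1)
  have := rpow_le_rpow_of_exponent_ge hu0 hu1 (le_max_left s 1)
  linarith

theorem one_sub_rpow_div_one_sub_rpow_le {u s α : ℝ} (hu0 : 0 < u) (hu1 : u < 1) :
    (1 - u ^ s) / (1 - u) ^ (α + 1) ≤ max s 1 * (1 - u) ^ (-α) := by
  have hv : 0 < 1 - u := sub_pos.2 hu1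
  rw [rpow_add_one hv.ne', rpow_neg hv.le, div_le_iff₀ (by positivity)]
  calc 1 - u ^ s ≤ max s 1 * (1 - u) := one_sub_rpow_le_max_mul_one_sub hu0 hu1.le
    _ = _ := by field_simp

theorem intervalIntegrable_one_sub_rpow_div_one_sub_rpow {α s : ℝ} (hα : α < 1)
    (hs : 0 ≤ s) :
    IntervalIntegrable (fun u : ℝ => (1 - u ^ s) / (1 - u) ^ (α + 1)) volume 0 1 := by
  have hdom : IntervalIntegrable (fun u : ℝ => max s 1 * (1 - u) ^ (-α)) volume 0 1 := by
    simpa using ((intervalIntegral.intervalIntegrable_rpow' (r := -α) (a := 1) (b := 0)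
      (by linarith)).comp_sub_left 1).const_mul (max s 1)
  refine hdom.mono_fun' (Measurable.aestronglyMeasurable (by fun_prop)) ?_
  rw [uIoc_of_le zero_le_one, EventuallyLE, ae_restrict_iff' measurableSet_Ioc]
  refine ae_of_all _ fun u ⟨hu0, hu1⟩ => ?_
  rcases hu1.lt_or_eq with hu1 | rfl
  · rw [norm_of_nonneg (div_nonneg (sub_nonneg.2 (rpow_le_one hu0.le hu1.le hs)) (by positivity))]
    exact one_sub_rpow_div_one_sub_rpow_le hu0 hu1
  · simp only [one_rpow, sub_self, zero_div, norm_zero]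
    positivity

theorem hasDerivAt_one_sub_rpow_mul_one_sub_rpow_neg {u s α : ℝ} (hu0 : 0 < u) (hu1 : u < 1) :
    HasDerivAt (fun u : ℝ => (1 - u ^ s) * (1 - u) ^ (-α))
      (α * ((1 - u ^ s) / (1 - u) ^ (α + 1)) - s * (u ^ (s - 1) * (1 - u) ^ (1 - α - 1))) u := by
  have hv : 0 < 1 - u := sub_pos.2 hu1
  have h := ((hasDerivAt_rpow_const (p := s) (Or.inl hu0.ne')).const_sub 1).mul
    (((hasDerivAt_id u).const_sub 1).rpow_const (p := -α) (Or.inl hv.ne'))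
  refine h.congr_deriv ?_
  rw [show 1 - α - 1 = -α by ring, show -α - 1 = -(α + 1) by ring, id, rpow_neg hv.le (α + 1),
    div_eq_mul_inv]
  ring

theorem tendsto_one_sub_rpow_mul_one_sub_rpow_neg_zero {s α : ℝ} (hs : 0 < s) :
    Tendsto (fun u : ℝ => (1 - u ^ s) * (1 - u) ^ (-α)) (𝓝[>] 0) (𝓝 1) := by
  have hcont : ContinuousAt (fun u : ℝ => (1 - u ^ s) * (1 - u) ^ (-α)) 0 :=
    ((continuousAt_rpow_const 0 s (Or.inr hs.le)).const_sub 1).mul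
      ((continuous_const.sub continuous_id).continuousAt.rpow_const (Or.inl (by norm_num)))
  simpa [zero_rpow hs.ne'] using hcont.tendsto.mono_left nhdsWithin_le_nhds

theorem tendsto_one_sub_rpow_mul_one_sub_rpow_neg_one {s α : ℝ} (hs : 0 ≤ s) (hα : α < 1) :
    Tendsto (fun u : ℝ => (1 - u ^ s) * (1 - u) ^ (-α)) (𝓝[<] 1) (𝓝 0) := by
  have hbound : Tendsto (fun u : ℝ => max s 1 * (1 - u) ^ (1 - α)) (𝓝[<] 1) (𝓝 0) := by
    have : ContinuousAt (fun u : ℝ => max s 1 * (1 - u) ^ (1 - α)) 1 :=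
      continuousAt_const.mul ((continuous_const.sub continuous_id).continuousAt.rpow_const
        (Or.inr (by linarith)))
    simpa [zero_rpow (by linarith : 1 - α ≠ 0)] using this.tendsto.mono_left nhdsWithin_le_nhds
  refine squeeze_zero' ?_ ?_ hbound
  all_goals filter_upwards [Ioo_mem_nhdsLT zero_lt_one] with u ⟨hu0, hu1⟩
  · exact mul_nonneg (sub_nonneg.2 (rpow_le_one hu0.le hu1.le hs)) (rpow_nonneg (by linarith) _)
  · have hv : 0 < 1 - u := sub_pos.2 hu1
    calc (1 - u ^ s) * (1 - u) ^ (-α) ≤ max s 1 * (1 - u) * (1 - u) ^ (-α) :=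
          mul_le_mul_of_nonneg_right (one_sub_rpow_le_max_mul_one_sub hu0 hu1.le) (by positivity)
      _ = max s 1 * (1 - u) ^ (1 - α) := by
          rw [mul_assoc, ← rpow_one_add' hv.le (by linarith)]
          ring_nf

theorem integral_one_sub_rpow_div_one_sub_rpow_eq_beta {α s : ℝ} (hα1 : α < 1) (hs : 0 < s) :
    α * ∫ u in (0:ℝ)..1, (1 - u ^ s) / (1 - u) ^ (α + 1)
      = s * ProbabilityTheory.beta s (1 - α) - 1 := by
  have hint := intervalIntegrable_one_sub_rpow_div_one_sub_rpow hα1 hs.le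
  have hbeta := intervalIntegrable_rpow_mul_one_sub_rpow hs (sub_pos.2 hα1)
  have hftc := intervalIntegral.integral_eq_sub_of_hasDerivAt_of_tendsto zero_lt_one
    (fun u hu => hasDerivAt_one_sub_rpow_mul_one_sub_rpow_neg hu.1 hu.2)
    ((hint.const_mul α).sub (hbeta.const_mul s))
    (tendsto_one_sub_rpow_mul_one_sub_rpow_neg_zero hs)
    (tendsto_one_sub_rpow_mul_one_sub_rpow_neg_one hs.le hα1)
  rw [intervalIntegral.integral_sub (hint.const_mul α) (hbeta.const_mul s),
    intervalIntegral.integral_const_mul, intervalIntegral.integral_const_mul,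
    integral_rpow_mul_one_sub_rpow hs (sub_pos.2 hα1)] at hftc
  linarith

theorem integral_one_sub_rpow_div_one_sub_rpow {α s : ℝ} (hα1 : α < 1) (hs : 0 ≤ s) :
    α * ∫ u in (0:ℝ)..1, (1 - u ^ s) / (1 - u) ^ (α + 1)
      = Gamma (1 - α) * Gamma (s + 1) / Gamma (s + 1 - α) - 1 := by
  rcases hs.eq_or_lt with rfl | hs
  · have : Gamma (1 - α) ≠ 0 := (Gamma_pos_of_pos (sub_pos.2 hα1)).ne'
    simp [this]
  · rw [integral_one_sub_rpow_div_one_sub_rpow_eq_beta hα1 hs, ProbabilityTheory.beta,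
      Gamma_add_one hs.ne', add_sub_assoc]
    ring

/-- **Laplace exponent of the subordinator `Y_α`.**
For `0 < α < 1` and `x ≥ 0`,
`∫_0^∞ (1 − e^{−xt}) e^{−t/α}(1 − e^{−t/α})^{−(α+1)} dt
  = Γ(1−α)Γ(αx+1)/Γ(α(x−1)+1) − 1`. -/
theorem laplace_exponent_Y_alpha
    (α : ℝ) (hα0 : 0 < α) (hα1 : α < 1) (x : ℝ) (hx : 0 ≤ x) :
    ∫ t in Set.Ioi (0:ℝ),
        (1 - Real.exp (-x * t)) *
          (Real.exp (-t / α) / (1 - Real.exp (-t / α)) ^ (α + 1))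
      = Real.Gamma (1 - α) * Real.Gamma (α * x + 1) / Real.Gamma (α * (x - 1) + 1) - 1 := by
  have hintegrand (t : ℝ) : (1 - exp (-x * t)) * (exp (-t / α) / (1 - exp (-t / α)) ^ (α + 1))
      = exp (-t / α) • ((1 - exp (-t / α) ^ (α * x)) / (1 - exp (-t / α)) ^ (α + 1)) := by
    rw [← exp_mul, smul_eq_mul, show -t / α * (α * x) = -x * t by field_simp]
    ring
  simp_rw [hintegrand]
  rw [integral_exp_neg_div_smul_comp_Ioi_zero (fun u => (1 - u ^ (α * x)) / (1 - u) ^ (α + 1))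
      hα0, smul_eq_mul, integral_one_sub_rpow_div_one_sub_rpow hα1 (mul_nonneg hα0.le hx),
    show α * (x - 1) + 1 = α * x + 1 - α by ring]
end

section
/- Let η ≥ 0 be a random variable with Laplace-type transform φ(t) := E[exp(−t e^{−η})]. Then the function z(t) := φ(e^t) − E[e^{−η}]·exp(−e^t) is nonincreasing in t ∈ ℝ. -/
open MeasureTheory ProbabilityTheory Real Set

/-! For each value `a = e^{-η} ∈ (0, 1]` the integrand `exp (-a e^t) - a exp (-e^t)` of
`z(t) = E[exp (-e^t e^{-η}) - e^{-η} exp (-e^t)]` is nonincreasing in `t`: as a function of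
`x = e^t ≥ 0` its derivative `a (exp (-x) - exp (-a x))` is `≤ 0` because `a ≤ 1`.
Monotonicity then passes through the expectation. -/

lemma antitoneOn_exp_neg_mul_sub_mul_exp_neg {a : ℝ} (ha0 : 0 ≤ a) (ha1 : a ≤ 1) :
    AntitoneOn (fun x => exp (-x * a) - a * exp (-x)) (Ici 0) := by
  have hderiv : ∀ x, HasDerivAt (fun x => exp (-x * a) - a * exp (-x))
      (a * (exp (-x) - exp (-x * a))) x := fun x =>
    (((hasDerivAt_neg x).mul_const a).exp.sub ((hasDerivAt_neg x).exp.const_mul a)).congr_deriv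
      (by ring)
  refine antitoneOn_of_deriv_nonpos (convex_Ici 0) ?_ ?_ ?_
  · exact HasDerivAt.continuousOn fun x _ => hderiv x
  · exact fun x _ => (hderiv x).differentiableAt.differentiableWithinAt
  · intro x hx
    rw [interior_Ici, mem_Ioi] at hx
    rw [(hderiv x).deriv]
    have : exp (-x) ≤ exp (-x * a) := exp_le_exp.mpr (by nlinarith)
    exact mul_nonpos_of_nonneg_of_nonpos ha0 (by linarith)

lemma antitone_exp_neg_mul_exp_sub_mul_exp_neg_exp {a : ℝ} (ha0 : 0 ≤ a) (ha1 : a ≤ 1) :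
    Antitone (fun t => exp (-exp t * a) - a * exp (-exp t)) :=
  fun s t hst => antitoneOn_exp_neg_mul_sub_mul_exp_neg ha0 ha1 (exp_pos s).le (exp_pos t).le
    (exp_le_exp.mpr hst)

lemma antitone_integral_of_ae_antitone {Ω : Type*} [MeasurableSpace Ω] {μ : Measure Ω}
    {F : ℝ → Ω → ℝ} (hint : ∀ t, Integrable (F t) μ) (hanti : ∀ᵐ ω ∂μ, Antitone (F · ω)) :
    Antitone (fun t => ∫ ω, F t ω ∂μ) :=
  fun _ _ hst => integral_mono_ae (hint _) (hint _) (hanti.mono fun _ h => h hst)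

/-- **Monotonicity of `z(t) = φ(e^t) − E[e^{−η}] e^{−e^t}`.**
For a nonnegative random variable `η` with `φ(t) = E[exp(−t e^{−η})]`, the function
`z(t) = φ(e^t) − E[e^{−η}]·exp(−e^t)` is nonincreasing on `ℝ`. -/
theorem z_antitone
    {Ω : Type*} [MeasurableSpace Ω] (μ : Measure Ω) [IsProbabilityMeasure μ]
    (η : Ω → ℝ) (hηmeas : Measurable η) (hη0 : ∀ᵐ ω ∂μ, 0 ≤ η ω)
    (φ : ℝ → ℝ) (hφ : ∀ t, φ t = ∫ ω, Real.exp (-t * Real.exp (-η ω)) ∂μ) :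
    Antitone (fun t : ℝ =>
      φ (Real.exp t) - (∫ ω, Real.exp (-η ω) ∂μ) * Real.exp (-Real.exp t)) := by
  have hle_one : ∀ᵐ ω ∂μ, exp (-η ω) ≤ 1 := hη0.mono fun ω h => exp_le_one_iff.mpr (by linarith)
  have hint_a : Integrable (fun ω => exp (-η ω)) μ :=
    Integrable.of_bound (by fun_prop) 1
      (hle_one.mono fun ω h => by rwa [norm_of_nonneg (exp_pos _).le])
  have hint_φ : ∀ t, Integrable (fun ω => exp (-exp t * exp (-η ω))) μ := fun t =>
    Integrable.of_bound (by fun_prop) 1 (ae_of_all _ fun ω => by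
      rw [norm_of_nonneg (exp_pos _).le, exp_le_one_iff]
      exact mul_nonpos_of_nonpos_of_nonneg (neg_nonpos.mpr (exp_pos t).le) (exp_pos _).le)
  have hz : ∀ t, φ (exp t) - (∫ ω, exp (-η ω) ∂μ) * exp (-exp t)
      = ∫ ω, (exp (-exp t * exp (-η ω)) - exp (-η ω) * exp (-exp t)) ∂μ := by
    intro t
    rw [hφ, integral_sub (hint_φ t) (hint_a.mul_const _), integral_mul_const]
  simp_rw [hz]
  refine antitone_integral_of_ae_antitone (fun t => (hint_φ t).sub (hint_a.mul_const _)) ?_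
  filter_upwards [hle_one] with ω h
  exact antitone_exp_neg_mul_exp_sub_mul_exp_neg_exp (exp_pos _).le h
end

section
/- Suppose Z_n = π*(A_n) in distribution for each n, where π* is a unit-rate Poisson process independent of nonnegative random variables A_n, and suppose Z_n converges in distribution to a proper nondegenerate random variable Z. Then A_n converges in distribution to some random variable A ≥ 0 and Z has a mixed Poisson law with mixing distribution the law of A, i.e., P{Z = m} = E[e^{−A} A^m/m!] for all m ∈ ℕ_0. -/
/-!
Let `ρₙ` be the law of `Aₙ` on `ℝ≥0`, so that `P{Zₙ = m} = ∫ e^{-r} r^m / m! dρₙ(r)`.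
The weights `e^{-r} r^m / m!` with `m < M` are uniformly small for large `r`, so mass of `ρₙ`
far out would leave `P{Zₙ ≥ M}` large; as the limit masses `P{Z = m}` sum to one,
`(ρₙ)` is tight. By Prokhorov's theorem `(ρₙ)` has cluster points, and since the weights are
bounded and continuous, every cluster point `ρ` satisfies `∫ e^{-r} r^m / m! dρ = P{Z = m}`.
These numbers determine `ρ`: up to the factor `m!` they are the derivatives at `-1` of the
Laplace transform `z ↦ ∫ e^{zr} dρ`, which is holomorphic on `Re z < 0` and continuous up to
the imaginary axis, where it is the characteristic function of `ρ`. So the cluster point is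
unique and `ρₙ` converges.
-/

open MeasureTheory ProbabilityTheory Real Set Filter
open scoped ENNReal NNReal Topology BoundedContinuousFunction

noncomputable def poissonWeight (m : ℕ) (a : ℝ) : ℝ := exp (-a) * a ^ m / m.factorial

lemma poissonWeight_nonneg (m : ℕ) (r : ℝ≥0) : 0 ≤ poissonWeight m r := by
  unfold poissonWeight; positivity

lemma hasSum_poissonWeight (r : ℝ≥0) : HasSum (fun m => poissonWeight m r) 1 :=
  hasSum_one_poissonMeasure r

lemma poissonWeight_le_one (m : ℕ) (r : ℝ≥0) : poissonWeight m r ≤ 1 :=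
  le_hasSum (hasSum_poissonWeight r) m fun j _ => poissonWeight_nonneg j r

lemma sum_poissonWeight_le_one (M : ℕ) (r : ℝ≥0) :
    ∑ m ∈ Finset.range M, poissonWeight m r ≤ 1 :=
  sum_le_hasSum _ (fun j _ => poissonWeight_nonneg j r) (hasSum_poissonWeight r)

lemma continuous_poissonWeight (m : ℕ) : Continuous (poissonWeight m) := by
  unfold poissonWeight; fun_prop

lemma tendsto_poissonWeight_atTop (m : ℕ) :
    Tendsto (fun r : ℝ≥0 => poissonWeight m r) atTop (𝓝 0) := by
  have h := ((tendsto_pow_mul_exp_neg_atTop_nhds_zero m).div_const (m.factorial : ℝ)).comp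
    (NNReal.tendsto_coe_atTop.mpr tendsto_id)
  simpa [poissonWeight, Function.comp_def, mul_comm] using h

noncomputable def poissonWeightBCF (m : ℕ) : ℝ≥0 →ᵇ ℝ :=
  BoundedContinuousFunction.ofNormedAddCommGroup (fun r : ℝ≥0 => poissonWeight m r)
    ((continuous_poissonWeight m).comp NNReal.continuous_coe) 1 fun r => by
      rw [Real.norm_of_nonneg (poissonWeight_nonneg m r)]
      exact poissonWeight_le_one m r

lemma integrable_poissonWeight (ρ : Measure ℝ≥0) [IsFiniteMeasure ρ] (m : ℕ) :
    Integrable (fun r : ℝ≥0 => poissonWeight m r) ρ :=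
  (poissonWeightBCF m).integrable ρ

section Uniqueness

variable {ρ : Measure ℝ≥0} [IsFiniteMeasure ρ]

lemma Iic_zero_subset_integrableExpSet_coe : Iic 0 ⊆ integrableExpSet (↑) ρ := fun t ht =>
  (integrable_const 1).mono' (by fun_prop) (ae_of_all _ fun r => by
    rw [Real.norm_of_nonneg (exp_nonneg _), exp_le_one_iff]
    exact mul_nonpos_of_nonpos_of_nonneg ht r.2)

lemma analyticOnNhd_complexMGF_coe :
    AnalyticOnNhd ℂ (complexMGF (↑) ρ) {z | z.re < 0} :=
  analyticOnNhd_complexMGF.mono fun z hz =>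
    interior_mono Iic_zero_subset_integrableExpSet_coe (by rw [interior_Iic]; exact hz)

lemma continuousOn_complexMGF_coe :
    ContinuousOn (complexMGF (↑) ρ) {z | z.re ≤ 0} := by
  refine continuousOn_of_dominated (bound := fun _ => 1) (fun z _ => by fun_prop)
    (fun z hz => ae_of_all _ fun r => ?_) (integrable_const 1)
    (ae_of_all _ fun r => by fun_prop)
  rw [Complex.norm_exp, exp_le_one_iff]
  simpa using mul_nonpos_of_nonpos_of_nonneg hz r.2

lemma iteratedDeriv_complexMGF_coe_neg_one (n : ℕ) :
    iteratedDeriv n (complexMGF (↑) ρ) (-1) = n.factorial * ∫ r, poissonWeight n r ∂ρ := by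
  have hmem : (-1 : ℂ).re ∈ interior (integrableExpSet (↑) ρ) :=
    interior_mono Iic_zero_subset_integrableExpSet_coe (by norm_num)
  rw [iteratedDeriv_complexMGF hmem, ← integral_complex_ofReal, ← integral_const_mul]
  refine integral_congr_ae (ae_of_all _ fun r => ?_)
  simp only [poissonWeight, Complex.ofReal_div, Complex.ofReal_mul, Complex.ofReal_pow,
    Complex.ofReal_exp, Complex.ofReal_neg, Complex.ofReal_natCast]
  have : (n.factorial : ℂ) ≠ 0 := by exact_mod_cast n.factorial_ne_zero
  field_simp

theorem MeasureTheory.Measure.ext_of_integral_poissonWeight_eq {ρ' : Measure ℝ≥0}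
    [IsFiniteMeasure ρ']
    (h : ∀ m, ∫ r, poissonWeight m r ∂ρ = ∫ r, poissonWeight m r ∂ρ') : ρ = ρ' := by
  have hball : Metric.ball (-1 : ℂ) 1 ⊆ {z | z.re < 0} := fun z hz => by
    have := (Complex.abs_re_le_norm (z + 1)).trans_lt (by simpa [dist_eq_norm] using hz)
    simp only [Complex.add_re, Complex.one_re] at this
    simp only [mem_ofPred_eq]
    linarith [abs_lt.1 this]
  have hnear : complexMGF (↑) ρ =ᶠ[𝓝 (-1)] complexMGF (↑) ρ' := by
    filter_upwards [Metric.ball_mem_nhds (-1 : ℂ) one_pos] with z hz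
    rw [← Complex.taylorSeries_eq_on_ball' hz
        (analyticOnNhd_complexMGF_coe.differentiableOn.mono hball),
      ← Complex.taylorSeries_eq_on_ball' hz
        (analyticOnNhd_complexMGF_coe.differentiableOn.mono hball)]
    simp only [iteratedDeriv_complexMGF_coe_neg_one, h]
  have hopen : EqOn (complexMGF (↑) ρ) (complexMGF (↑) ρ') {z | z.re < 0} :=
    analyticOnNhd_complexMGF_coe.eqOn_of_preconnected_of_eventuallyEq
      analyticOnNhd_complexMGF_coe (convex_halfSpace_re_lt 0).isPreconnected (by norm_num) hnear
  have hclosed : EqOn (complexMGF (↑) ρ) (complexMGF (↑) ρ') {z | z.re ≤ 0} :=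
    hopen.of_subset_closure continuousOn_complexMGF_coe continuousOn_complexMGF_coe
      (fun z (hz : z.re < 0) => hz.le) (by rw [Complex.closure_setOfPred_re_lt])
  have hmap : ρ.map (↑) = ρ'.map ((↑) : ℝ≥0 → ℝ) := by
    refine Measure.ext_of_charFun (funext fun t => ?_)
    rw [← complexMGF_mul_I (by fun_prop), ← complexMGF_mul_I (by fun_prop)]
    exact hclosed (by simp)
  have hret (ν : Measure ℝ≥0) : (ν.map (↑)).map Real.toNNReal = ν := by
    rw [Measure.map_map (by fun_prop) (by fun_prop)]
    simp [Function.comp_def]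
  rw [← hret ρ, ← hret ρ', hmap]

end Uniqueness

section Tightness

lemma isTightMeasureSet_range_of_eventually_measureReal_Ioi_le {ρ : ℕ → Measure ℝ≥0}
    [∀ n, IsFiniteMeasure (ρ n)]
    (h : ∀ ε : ℝ, 0 < ε → ∃ R : ℝ≥0, ∀ᶠ n in atTop, (ρ n).real (Ioi R) ≤ ε) :
    IsTightMeasureSet (range ρ) := by
  have hlimsup : Tendsto (fun R : ℝ≥0 => limsup (fun n => ρ n (Ioi R)) atTop) atTop (𝓝 0) := by
    refine ENNReal.tendsto_nhds_zero.2 fun ε hε => ?_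
    obtain ⟨δ, -, hδ, hδε⟩ := ENNReal.lt_iff_exists_real_btwn.1 hε
    obtain ⟨R, hR⟩ := h δ (ENNReal.ofReal_pos.1 hδ)
    filter_upwards [eventually_ge_atTop R] with R' hR'
    refine limsup_le_of_le (by isBoundedDefault) (hR.mono fun n hn => ?_)
    calc ρ n (Ioi R') ≤ ρ n (Ioi R) := measure_mono (Ioi_subset_Ioi hR')
      _ = ENNReal.ofReal ((ρ n).real (Ioi R)) :=
        (ofReal_measureReal (measure_ne_top _ _)).symm
      _ ≤ ε := (ENNReal.ofReal_le_ofReal hn).trans hδε.le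
  have hsup : Tendsto (fun R : ℝ≥0 => ⨆ n, ρ n (Ioi R)) atTop (𝓝 0) := by
    refine Nat.tendsto_iSup_of_tendsto_limsup (fun n => ?_) hlimsup
      (fun n R R' hRR' => measure_mono (Ioi_subset_Ioi hRR'))
    have := tendsto_measure_iInter_atTop (μ := ρ n) (s := fun R : ℝ≥0 => Ioi R)
      (fun R => measurableSet_Ioi.nullMeasurableSet) (fun R R' h => Ioi_subset_Ioi h)
      ⟨0, measure_ne_top _ _⟩
    rwa [show (⋂ R : ℝ≥0, Ioi R) = ∅ from eq_empty_of_forall_notMem fun r hr =>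
      lt_irrefl r (mem_iInter.1 hr r), measure_empty] at this
  refine isTightMeasureSet_iff_exists_isCompact_measure_compl_le.2 fun ε hε => ?_
  obtain ⟨R, hR⟩ := (ENNReal.tendsto_nhds_zero.1 hsup ε hε).exists
  refine ⟨Icc 0 R, isCompact_Icc, forall_mem_range.2 fun n => ?_⟩
  calc ρ n (Icc 0 R)ᶜ = ρ n (Ioi R) := by congr 1; ext r; simp
    _ ≤ ⨆ n, ρ n (Ioi R) := le_iSup (fun n => ρ n (Ioi R)) n
    _ ≤ ε := hR

lemma measureReal_Ioi_le_of_sum_poissonWeight_le {ρ : Measure ℝ≥0} [IsProbabilityMeasure ρ]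
    {M : ℕ} {R : ℝ≥0} (hR : ∀ r, R < r → ∑ m ∈ Finset.range M, poissonWeight m r ≤ 1 / 2) :
    ρ.real (Ioi R) ≤ 2 * (1 - ∑ m ∈ Finset.range M, ∫ r, poissonWeight m r ∂ρ) := by
  set S : ℝ≥0 → ℝ := fun r => ∑ m ∈ Finset.range M, poissonWeight m r
  have hS : Integrable S ρ :=
    integrable_finsetSum _ fun m _ => integrable_poissonWeight ρ m
  have hgap : Integrable (fun r => 1 - S r) ρ := (integrable_const 1).sub hS
  calc ρ.real (Ioi R) = 2 * ∫ _ in Ioi R, (1 / 2 : ℝ) ∂ρ := by simp; ring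
    _ ≤ 2 * ∫ r in Ioi R, (1 - S r) ∂ρ := mul_le_mul_of_nonneg_left
      (setIntegral_mono_on (integrable_const _).integrableOn hgap.integrableOn
        measurableSet_Ioi fun r hr => by linarith [hR r hr]) zero_le_two
    _ ≤ 2 * ∫ r, (1 - S r) ∂ρ := mul_le_mul_of_nonneg_left
      (setIntegral_le_integral hgap
        (ae_of_all _ fun r => sub_nonneg.2 (sum_poissonWeight_le_one M r))) zero_le_two
    _ = 2 * (1 - ∑ m ∈ Finset.range M, ∫ r, poissonWeight m r ∂ρ) := by
      rw [integral_sub (integrable_const 1) hS, integral_finsetSum _ fun m _ =>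
        integrable_poissonWeight ρ m]
      simp

lemma isTightMeasureSet_range_of_tendsto_integral_poissonWeight {ρ : ℕ → Measure ℝ≥0}
    [∀ n, IsProbabilityMeasure (ρ n)] {p : ℕ → ℝ} (hp : HasSum p 1)
    (h : ∀ m, Tendsto (fun n => ∫ r, poissonWeight m r ∂(ρ n)) atTop (𝓝 (p m))) :
    IsTightMeasureSet (range ρ) := by
  refine isTightMeasureSet_range_of_eventually_measureReal_Ioi_le fun ε hε => ?_
  obtain ⟨M, hM⟩ :=
    (hp.tendsto_sum_nat.eventually (lt_mem_nhds (by linarith : 1 - ε / 2 < 1))).exists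
  have htail :
      Tendsto (fun r : ℝ≥0 => ∑ m ∈ Finset.range M, poissonWeight m r) atTop (𝓝 0) := by
    simpa using tendsto_finsetSum (Finset.range M) fun m _ => tendsto_poissonWeight_atTop m
  obtain ⟨R, hR⟩ :=
    eventually_atTop.1 (htail.eventually (ge_mem_nhds (by norm_num : (0 : ℝ) < 1 / 2)))
  refine ⟨R, ?_⟩
  filter_upwards [(tendsto_finsetSum (Finset.range M) fun m _ => h m).eventually
    (lt_mem_nhds hM)] with n hn
  linarith [measureReal_Ioi_le_of_sum_poissonWeight_le (ρ := ρ n) fun r hr => hR r hr.le]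

end Tightness

lemma MapClusterPt.eq_of_tendsto {X α : Type*} [TopologicalSpace X] [T2Space X]
    {F : Filter α} {u : α → X} {x y : X} (hx : MapClusterPt x F u) (hu : Tendsto u F (𝓝 y)) :
    x = y :=
  eq_of_nhds_neBot (hx.clusterPt.mono hu)

theorem exists_tendsto_of_tendsto_integral_poissonWeight {ρ : ℕ → ProbabilityMeasure ℝ≥0}
    {p : ℕ → ℝ} (hp : HasSum p 1)
    (h : ∀ m, Tendsto (fun n => ∫ r : ℝ≥0, poissonWeight m r ∂(ρ n)) atTop (𝓝 (p m))) :
    ∃ ρ₀ : ProbabilityMeasure ℝ≥0,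
      Tendsto ρ atTop (𝓝 ρ₀) ∧ ∀ m, ∫ r : ℝ≥0, poissonWeight m r ∂ρ₀ = p m := by
  have hK : IsCompact (closure (range ρ)) := by
    refine isCompact_closure_of_isTightMeasureSet ?_
    convert isTightMeasureSet_range_of_tendsto_integral_poissonWeight hp h using 1
    ext; simp
  have hcluster (L : ProbabilityMeasure ℝ≥0) (hL : MapClusterPt L atTop ρ) (m : ℕ) :
      ∫ r : ℝ≥0, poissonWeight m r ∂L = p m :=
    (hL.continuousAt_comp
      (ProbabilityMeasure.continuous_integral_boundedContinuousFunction
        (poissonWeightBCF m)).continuousAt).eq_of_tendsto (h m)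
  have hmem : ∀ n, ρ n ∈ closure (range ρ) := fun n => subset_closure (mem_range_self n)
  obtain ⟨ρ₀, -, hρ₀⟩ := hK.exists_mapClusterPt (u := ρ) (f := atTop)
    (tendsto_principal.2 (Eventually.of_forall hmem))
  refine ⟨ρ₀, hK.tendsto_nhds_of_unique_mapClusterPt (Eventually.of_forall hmem)
    fun L _ hL => ?_, hcluster ρ₀ hρ₀⟩
  exact ProbabilityMeasure.toMeasure_injective (Measure.ext_of_integral_poissonWeight_eq
    fun m => (hcluster L hL m).trans (hcluster ρ₀ hρ₀ m).symm)

lemma map_coe_map_toNNReal {Ω : Type*} [MeasurableSpace Ω] {μ : Measure Ω} {X : Ω → ℝ}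
    (hX : Measurable X) (h0 : ∀ᵐ ω ∂μ, 0 ≤ X ω) :
    (μ.map fun ω => (X ω).toNNReal).map (↑) = μ.map X := by
  rw [Measure.map_map (by fun_prop) (by fun_prop)]
  exact Measure.map_congr (h0.mono fun ω hω => Real.coe_toNNReal _ hω)

lemma lintegral_map_coe_ofReal_poissonWeight (ρ : Measure ℝ≥0) [IsFiniteMeasure ρ] (m : ℕ) :
    ∫⁻ a, ENNReal.ofReal (poissonWeight m a) ∂(ρ.map (↑)) =
      ENNReal.ofReal (∫ r : ℝ≥0, poissonWeight m r ∂ρ) := by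
  rw [lintegral_map (by unfold poissonWeight; fun_prop) (by fun_prop),
    ofReal_integral_eq_lintegral_ofReal (integrable_poissonWeight ρ m)
      (ae_of_all _ (poissonWeight_nonneg m))]

lemma hasSum_measureReal_setOf_eq {Ω β : Type*} [MeasurableSpace Ω] [MeasurableSpace β]
    [Countable β] [MeasurableSingletonClass β] (μ : Measure Ω) [IsProbabilityMeasure μ]
    {X : Ω → β} (hX : Measurable X) :
    HasSum (fun m => μ.real {ω | X ω = m}) 1 := by
  have h : ∑' m, μ {ω | X ω = m} = 1 := by
    rw [← measure_iUnion (f := fun m => {ω | X ω = m})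
      (fun i j hij => disjoint_left.2 fun ω hi hj => hij (hi.symm.trans hj))
      fun m => hX (measurableSet_singleton m)]
    rw [iUnion_eq_univ_iff.2 fun ω => ⟨X ω, rfl⟩, measure_univ]
  have := ENNReal.hasSum_toReal (h ▸ ENNReal.one_ne_top)
  rwa [← ENNReal.tsum_toReal_eq fun m => measure_ne_top μ _, h, ENNReal.toReal_one] at this

theorem limit_of_mixed_poisson_is_mixed_poisson_general
    {Ω : Type*} [MeasurableSpace Ω] (μ : Measure Ω) [IsProbabilityMeasure μ]
    (A : ℕ → Ω → ℝ) (hAmeas : ∀ n, Measurable (A n))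
    (hA0 : ∀ n, ∀ᵐ ω ∂μ, 0 ≤ A n ω)
    (Z : ℕ → Ω → ℕ)
    -- each `Z n` is mixed Poisson with mixing variable `A n`
    (hmix : ∀ n m, μ {ω | Z n ω = m}
      = ∫⁻ ω, ENNReal.ofReal (Real.exp (-A n ω) * (A n ω) ^ m / (Nat.factorial m)) ∂μ)
    -- convergence in distribution of the `ℕ`-valued `Z n` to a proper `Zlim`
    (Zlim : Ω → ℕ) (hZlimmeas : Measurable Zlim)
    (hconv : ∀ m, Tendsto (fun n => μ {ω | Z n ω = m}) atTop (nhds (μ {ω | Zlim ω = m}))) :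
    ∃ ν : Measure ℝ, IsProbabilityMeasure ν ∧ ν (Set.Iio 0) = 0 ∧
      (∀ f : BoundedContinuousFunction ℝ ℝ,
        Tendsto (fun n => ∫ ω, f (A n ω) ∂μ) atTop (nhds (∫ a, f a ∂ν))) ∧
      (∀ m : ℕ, μ {ω | Zlim ω = m}
        = ∫⁻ a, ENNReal.ofReal (Real.exp (-a) * a ^ m / (Nat.factorial m)) ∂ν) := by
  let ρ n : ProbabilityMeasure ℝ≥0 :=
    ⟨μ.map fun ω => (A n ω).toNNReal, Measure.isProbabilityMeasure_map (by fun_prop)⟩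
  have hρ n : (ρ n : Measure ℝ≥0).map (↑) = μ.map (A n) :=
    map_coe_map_toNNReal (hAmeas n) (hA0 n)
  have hZ n m : μ {ω | Z n ω = m} = ENNReal.ofReal (∫ r : ℝ≥0, poissonWeight m r ∂(ρ n)) := by
    rw [hmix, ← lintegral_map_coe_ofReal_poissonWeight, hρ,
      lintegral_map (by unfold poissonWeight; fun_prop) (hAmeas n)]
    rfl
  have hlim m : Tendsto (fun n => ∫ r : ℝ≥0, poissonWeight m r ∂(ρ n)) atTop
      (𝓝 (μ.real {ω | Zlim ω = m})) := by
    refine ((ENNReal.tendsto_toReal (measure_ne_top _ _)).comp (hconv m)).congr fun n => ?_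
    have : 0 ≤ ∫ r : ℝ≥0, poissonWeight m r ∂(ρ n) :=
      integral_nonneg fun r => poissonWeight_nonneg m r
    simp [hZ, this]
  obtain ⟨ρ₀, hρρ₀, hρ₀⟩ := exists_tendsto_of_tendsto_integral_poissonWeight
    (hasSum_measureReal_setOf_eq μ hZlimmeas) hlim
  refine ⟨(ρ₀ : Measure ℝ≥0).map (↑), Measure.isProbabilityMeasure_map (by fun_prop), ?_,
    fun f => ?_, fun m => ?_⟩
  · have hneg : ((↑) : ℝ≥0 → ℝ) ⁻¹' Iio 0 = ∅ :=
      eq_empty_of_forall_notMem fun r hr => not_lt.2 r.2 hr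
    rw [Measure.map_apply (by fun_prop) measurableSet_Iio, hneg, measure_empty]
  · have := ProbabilityMeasure.tendsto_iff_forall_integral_tendsto.1
      (ProbabilityMeasure.tendsto_map_of_tendsto_of_continuous _ _ hρρ₀ NNReal.continuous_coe) f
    simp only [ProbabilityMeasure.toMeasure_map, hρ] at this
    exact this.congr fun n =>
      integral_map (hAmeas n).aemeasurable f.continuous.aestronglyMeasurable
  · exact (lintegral_map_coe_ofReal_poissonWeight (ρ₀ : Measure ℝ≥0) m).trans
      (by rw [hρ₀, ofReal_measureReal (measure_ne_top _ _)]) |>.symm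

/-- **Limits of mixed Poisson laws are mixed Poisson.**
If `Z_n` is mixed Poisson with mixing variable `A_n ≥ 0` (i.e. `Z_n = π*(A_n)` in
distribution for a unit-rate Poisson process `π*` independent of `A_n`) and
`Z_n → Z` in distribution with `Z` proper and nondegenerate, then the `A_n`
converge in distribution to some `A ≥ 0` and `Z` is mixed Poisson:
`P{Z = m} = E[e^{−A} A^m/m!]`. -/
theorem limit_of_mixed_poisson_is_mixed_poisson
    {Ω : Type*} [MeasurableSpace Ω] (μ : Measure Ω) [IsProbabilityMeasure μ]
    (A : ℕ → Ω → ℝ) (hAmeas : ∀ n, Measurable (A n))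
    (hA0 : ∀ n, ∀ᵐ ω ∂μ, 0 ≤ A n ω)
    (Z : ℕ → Ω → ℕ) (hZmeas : ∀ n, Measurable (Z n))
    -- each `Z n` is mixed Poisson with mixing variable `A n`
    (hmix : ∀ n m, μ {ω | Z n ω = m}
      = ∫⁻ ω, ENNReal.ofReal (Real.exp (-A n ω) * (A n ω) ^ m / (Nat.factorial m)) ∂μ)
    -- convergence in distribution of the `ℕ`-valued `Z n` to a proper `Zlim`
    (Zlim : Ω → ℕ) (hZlimmeas : Measurable Zlim)
    (hconv : ∀ m, Tendsto (fun n => μ {ω | Z n ω = m}) atTop (nhds (μ {ω | Zlim ω = m})))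
    (hnondeg : ¬ ∃ c : ℕ, μ {ω | Zlim ω = c} = 1) :
    ∃ ν : Measure ℝ, IsProbabilityMeasure ν ∧ ν (Set.Iio 0) = 0 ∧
      (∀ f : BoundedContinuousFunction ℝ ℝ,
        Tendsto (fun n => ∫ ω, f (A n ω) ∂μ) atTop (nhds (∫ a, f a ∂ν))) ∧
      (∀ m : ℕ, μ {ω | Zlim ω = m}
        = ∫⁻ a, ENNReal.ofReal (Real.exp (-a) * a ^ m / (Nat.factorial m)) ∂ν) :=
  limit_of_mixed_poisson_is_mixed_poisson_general μ A hAmeas hA0 Z hmix Zlim hZlimmeas hconv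
end
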